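/- Let R be an associative real algebra with identity, equipped with an involution γ (an ℝ-linear anti-automorphism with γ∘γ = id) such that γ(a)·a = a·γ(a) ∈ ℝ·1 for all a ∈ R. Then the norm polynomial is multiplicative: for all A, B ∈ R[t], ν(A·B) = ν(A)·ν(B), where ν(C) := C·γ(C). In particular, if C = C'·(t − h) then ν(t − h) divides ν(C). -/

import Mathlib

open Polynomial Finset

/-- Coefficientwise application of the involution `star` to a left polynomial. -/
noncomputable def pconj {R : Type*} [Ring R] [StarRing R] (p : Polynomial R) : Polynomial R :=
  ⟨AddMonoidAlgebra.ofCoeff (Finsupp.mapRange star (star_zero R) p.toFinsupp.coeff)⟩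

/-!
The conjugation `pconj` reverses products, so `ν(AB) = A ν(B) γ(A)`. Every coefficient of `ν(B)`
is real: pairing the terms `B_i γ(B_j)` and `B_j γ(B_i)` of the `n`-th coefficient gives
`B_i γ(B_j) + B_j γ(B_i) = ν(B_i + B_j) - ν(B_i) - ν(B_j)`, so twice the coefficient is real.
Hence `ν(B)` is central in `R[t]` and can be moved past `γ(A)`.
-/

theorem commute_of_coeff_mem_bot {K R : Type*} [CommSemiring K] [Semiring R] [Algebra K R]
    {P : R[X]} (hP : ∀ n, P.coeff n ∈ (⊥ : Subalgebra K R)) (Q : R[X]) : Commute P Q := by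
  ext n
  rw [coeff_mul, coeff_mul, ← Nat.sum_antidiagonal_swap]
  refine sum_congr rfl fun p _ => ?_
  obtain ⟨r, hr⟩ := Algebra.mem_bot.mp (hP p.2)
  rw [Prod.fst_swap, Prod.snd_swap, ← hr]
  exact Algebra.commutes r (Q.coeff p.1)

section Conjugation

variable {R : Type*} [Ring R] [StarRing R]

theorem coeff_pconj (p : R[X]) (n : ℕ) : (pconj p).coeff n = star (p.coeff n) := by
  simp [pconj, Polynomial.coeff, Finsupp.mapRange_apply]

theorem pconj_mul (A B : R[X]) : pconj (A * B) = pconj B * pconj A := by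
  ext n
  simp only [coeff_pconj, coeff_mul, star_sum, star_mul]
  exact Nat.sum_antidiagonal_swap (f := fun p => star (B.coeff p.1) * star (A.coeff p.2))

variable {K : Type*} [CommRing K] [Algebra K R]
  (hreal : ∀ a : R, ∃ r : K, star a * a = algebraMap K R r)
include hreal

theorem mul_star_add_mul_star_mem_bot (x y : R) :
    x * star y + y * star x ∈ (⊥ : Subalgebra K R) := by
  have mul_star_self_mem (a : R) : a * star a ∈ (⊥ : Subalgebra K R) := by
    obtain ⟨r, hr⟩ := hreal (star a)
    exact Algebra.mem_bot.mpr ⟨r, by rw [← hr, star_star]⟩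
  have polarization :
      x * star y + y * star x = (x + y) * star (x + y) - x * star x - y * star y := by
    rw [star_add]; noncomm_ring
  rw [polarization]
  exact Subalgebra.sub_mem _ (Subalgebra.sub_mem _ (mul_star_self_mem _) (mul_star_self_mem x))
    (mul_star_self_mem y)

theorem coeff_mul_pconj_self_mem_bot [Invertible (2 : K)] (B : R[X]) (n : ℕ) :
    (B * pconj B).coeff n ∈ (⊥ : Subalgebra K R) := by
  set c := (B * pconj B).coeff n
  have hc : c = ∑ p ∈ antidiagonal n, B.coeff p.1 * star (B.coeff p.2) := by
    simp only [c, coeff_mul, coeff_pconj]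
  have two_c : c + c = ∑ p ∈ antidiagonal n,
      (B.coeff p.1 * star (B.coeff p.2) + B.coeff p.2 * star (B.coeff p.1)) := by
    rw [sum_add_distrib, ← hc]
    congr 1
    exact hc.trans (Nat.sum_antidiagonal_swap
      (f := fun p => B.coeff p.1 * star (B.coeff p.2))).symm
  have two_c_mem : c + c ∈ (⊥ : Subalgebra K R) := by
    rw [two_c]
    exact Subalgebra.sum_mem _ fun p _ => mul_star_add_mul_star_mem_bot hreal _ _
  have half : c = (⅟2 : K) • (c + c) := by
    rw [← two_smul K c, smul_smul, invOf_mul_self, one_smul]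
  rw [half]
  exact Subalgebra.smul_mem _ two_c_mem _

theorem commute_mul_pconj_self [Invertible (2 : K)] (B Q : R[X]) : Commute (B * pconj B) Q :=
  commute_of_coeff_mem_bot (coeff_mul_pconj_self_mem_bot hreal B) Q

theorem mul_pconj_mul [Invertible (2 : K)] (A B : R[X]) :
    (A * B) * pconj (A * B) = (A * pconj A) * (B * pconj B) := by
  calc (A * B) * pconj (A * B) = A * ((B * pconj B) * pconj A) := by
        rw [pconj_mul]; noncomm_ring
    _ = A * (pconj A * (B * pconj B)) := by rw [(commute_mul_pconj_self hreal B _).eq]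
    _ = (A * pconj A) * (B * pconj B) := by noncomm_ring

end Conjugation

theorem norm_polynomial_multiplicative_general {R : Type*} [Ring R] [Algebra ℝ R]
    [StarRing R]
    (hreal : ∀ a : R, ∃ r : ℝ, star a * a = algebraMap ℝ R r) :
    (∀ A B : Polynomial R, (A * B) * pconj (A * B) = (A * pconj A) * (B * pconj B)) ∧
    ∀ (F F' : Polynomial R) (h : R), F = F' * (X - Polynomial.C h) →
      (X - Polynomial.C h) * pconj (X - Polynomial.C h) ∣ F * pconj F := by
  refine ⟨mul_pconj_mul hreal, fun F F' h hF => ⟨F' * pconj F', ?_⟩⟩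
  rw [hF, mul_pconj_mul hreal]
  exact (commute_mul_pconj_self hreal _ _).symm.eq

/-- If the involution satisfies `star a * a = a * star a ∈ ℝ·1` for all `a`, then the norm
polynomial `ν(F) = F · γ(F)` is multiplicative; in particular `ν(t - h) ∣ ν(F)` whenever
`t - h` is a right factor of `F`. -/
theorem norm_polynomial_multiplicative {R : Type*} [Ring R] [Algebra ℝ R]
    [StarRing R] [StarModule ℝ R]
    (hcomm : ∀ a : R, star a * a = a * star a)
    (hreal : ∀ a : R, ∃ r : ℝ, star a * a = algebraMap ℝ R r) :
    (∀ A B : Polynomial R, (A * B) * pconj (A * B) = (A * pconj A) * (B * pconj B)) ∧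
    ∀ (F F' : Polynomial R) (h : R), F = F' * (X - Polynomial.C h) →
      (X - Polynomial.C h) * pconj (X - Polynomial.C h) ∣ F * pconj F :=
  norm_polynomial_multiplicative_general hreal
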